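/- Let a, b > 0, let ϑ₂ : [0,a] → [0,b] be a C¹ strictly decreasing bijection onto [0,b] with inverse ϑ₁, and let D := {(s,t) : 0 ≤ s ≤ a, 0 ≤ t ≤ ϑ₂(s)}, with E(s,t) := {(σ,τ) ∈ D : σ ≥ s, τ ≥ t}. Let g : D × ℝⁿ × ℝⁿ × ℝⁿ → ℝⁿ be continuous, and let ψ₀ : D → ℝⁿ be continuous with continuous first partial derivatives. Suppose (ψ,P,Q) is a triple of continuous functions D → ℝⁿ satisfying, on D: ψ(s,t) = ψ₀(s,t) + ∬_{E(s,t)} g(σ,τ,ψ(σ,τ),P(σ,τ),Q(σ,τ)) dA(σ,τ); P(s,t) = (∂ψ₀/∂s)(s,t) − ∫_t^{ϑ₂(s)} g(s,τ,ψ(s,τ),P(s,τ),Q(s,τ)) dτ; Q(s,t) = (∂ψ₀/∂t)(s,t) − ∫_s^{ϑ₁(t)} g(σ,t,ψ(σ,t),P(σ,t),Q(σ,t)) dσ. Then ψ has continuous first partial derivatives on the interior of D, with ∂ψ/∂s = P and ∂ψ/∂t = Q; in particular ψ solves the single integral equation ψ(s,t) = ψ₀(s,t) + ∬_{E(s,t)}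 g(σ,τ,ψ(σ,τ),(∂ψ/∂σ)(σ,τ),(∂ψ/∂τ)(σ,τ)) dA(σ,τ). -/

import Mathlib

/-!
By Fubini, the integral of `g (·, ψ, P, Q)` over `E(σ, t)` is `∫_σ^a w`, where `w x` is the
integral over the vertical slice of `E(σ, t)` at `x`. The slice does not depend on `σ` and `w` is
continuous, so the fundamental theorem of calculus gives `-w s` as the `s`-derivative: together
with `∂ψ₀/∂s` this is the right-hand side of the equation for `P`. Reflecting in the diagonal maps
`D` onto the region under the graph of `ϑ₁` and exchanges `s` and `t`, which gives `Q`. Finally the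
boundary of `D` is Lebesgue-null, so `∂ψ/∂s = P` and `∂ψ/∂t = Q` almost everywhere on `E(s, t)`.
-/

open Set MeasureTheory intervalIntegral Filter Topology

universe u v

theorem Set.InvOn.continuousOn_of_isCompact {X Y : Type*} [TopologicalSpace X]
    [TopologicalSpace Y] [T2Space Y] {f : X → Y} {g : Y → X} {s : Set X} {t : Set Y}
    (hinv : InvOn g f s t) (hs : IsCompact s) (hf : ContinuousOn f s) (hg : MapsTo g t s) :
    ContinuousOn g t := by
  refine continuousOn_iff_isClosed.2 fun C hC => ⟨f '' (C ∩ s), ?_, ?_⟩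
  · exact ((hs.inter_left hC).image_of_continuousOn (hf.mono inter_subset_right)).isClosed
  · ext y
    constructor
    · rintro ⟨hyC, hyt⟩
      exact ⟨⟨g y, ⟨hyC, hg hyt⟩, hinv.2 hyt⟩, hyt⟩
    · rintro ⟨⟨x, ⟨hxC, hxs⟩, rfl⟩, hyt⟩
      exact ⟨by rwa [mem_preimage, hinv.1 hxs], hyt⟩

theorem ContinuousOn.exists_continuous_eqOn {X : Type u} {Y : Type v} [TopologicalSpace X]
    [NormalSpace X] [TopologicalSpace Y] [TietzeExtension.{u, v} Y] {s : Set X} {f : X → Y}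
    (hs : IsClosed s) (hf : ContinuousOn f s) : ∃ F : X → Y, Continuous F ∧ EqOn F f s := by
  obtain ⟨F, hF⟩ := ContinuousMap.exists_restrict_eq hs ⟨_, hf.domRestrict⟩
  exact ⟨F, F.continuous, fun x hx => DFunLike.congr_fun hF ⟨x, hx⟩⟩

section Fubini

variable {α β E : Type*} [MeasurableSpace α] [MeasurableSpace β] {μ : Measure α} {ν : Measure β}
  [SFinite μ] [SFinite ν] [NormedAddCommGroup E] [NormedSpace ℝ E] {G : α × β → E}

theorem setIntegral_eq_setIntegral_setIntegral {A : Set α} {B : α → Set β}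
    (hA : MeasurableSet A) (hS : MeasurableSet {p : α × β | p.1 ∈ A ∧ p.2 ∈ B p.1})
    (hG : IntegrableOn G {p | p.1 ∈ A ∧ p.2 ∈ B p.1} (μ.prod ν)) :
    ∫ p in {p : α × β | p.1 ∈ A ∧ p.2 ∈ B p.1}, G p ∂μ.prod ν =
      ∫ x in A, ∫ y in B x, G (x, y) ∂ν ∂μ := by
  set S := {p : α × β | p.1 ∈ A ∧ p.2 ∈ B p.1}
  have hslice : ∀ x, ∫ y, S.indicator G (x, y) ∂ν =
      A.indicator (fun x => ∫ y in B x, G (x, y) ∂ν) x := by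
    intro x
    by_cases hx : x ∈ A
    · have hB : Prod.mk x ⁻¹' S = B x := by ext y; simp [S, hx]
      rw [indicator_of_mem hx, ← hB,
        ← MeasureTheory.integral_indicator (measurable_prodMk_left hS)]
      rfl
    · simp [S, hx]
  rw [← MeasureTheory.integral_indicator hS, integral_prod _ ((integrable_indicator_iff hS).2 hG)]
  simp_rw [hslice]
  exact MeasureTheory.integral_indicator hA

end Fubini

theorem setIntegral_Icc_eq_intervalIntegral_max {E : Type*} [NormedAddCommGroup E]
    [NormedSpace ℝ E] (h : ℝ → E) (t v : ℝ) :
    ∫ y in Icc t v, h y = ∫ y in t..max t v, h y := by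
  rcases le_total t v with htv | hvt
  · rw [max_eq_right htv, integral_of_le htv, integral_Icc_eq_integral_Ioc]
  · rw [max_eq_left hvt, integral_same]
    rcases hvt.eq_or_lt with rfl | hlt
    · simp
    · simp [Icc_eq_empty_of_lt hlt]

def subgraph (a : ℝ) (f : ℝ → ℝ) : Set (ℝ × ℝ) :=
  {p | 0 ≤ p.1 ∧ p.1 ≤ a ∧ 0 ≤ p.2 ∧ p.2 ≤ f p.1}

def upperRight (D : Set (ℝ × ℝ)) (p : ℝ × ℝ) : Set (ℝ × ℝ) :=
  {q ∈ D | p.1 ≤ q.1 ∧ p.2 ≤ q.2}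

theorem MeasurableSet.upperRight {D : Set (ℝ × ℝ)} (hD : MeasurableSet D) (p : ℝ × ℝ) :
    MeasurableSet (upperRight D p) :=
  hD.inter ((measurableSet_le measurable_const measurable_fst).inter
    (measurableSet_le measurable_const measurable_snd))

theorem upperRight_preimage_swap (D : Set (ℝ × ℝ)) (p : ℝ × ℝ) :
    upperRight (Prod.swap ⁻¹' D) p = Prod.swap ⁻¹' upperRight D p.swap := by
  ext q
  simp only [upperRight, mem_preimage, mem_ofPred_eq, Prod.fst_swap, Prod.snd_swap]
  tauto

section Subgraph

variable {a : ℝ} {f : ℝ → ℝ}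

theorem mk_mem_subgraph_of_mem_uIcc {p : ℝ × ℝ} (hp : p ∈ subgraph a f) {τ : ℝ}
    (hτ : τ ∈ uIcc p.2 (f p.1)) : (p.1, τ) ∈ subgraph a f := by
  rw [uIcc_of_le hp.2.2.2] at hτ
  exact ⟨hp.1, hp.2.1, hp.2.2.1.trans hτ.1, hτ.2⟩

theorem isClosed_subgraph (hf : ContinuousOn f (Icc 0 a)) : IsClosed (subgraph a f) := by
  have h : subgraph a f = (Icc 0 a ×ˢ Ici 0) ∩ (fun q => f q.1 - q.2) ⁻¹' Ici 0 := by
    ext q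
    simp only [subgraph, mem_ofPred_eq, mem_inter_iff, mem_prod, mem_Icc, mem_Ici, mem_preimage,
      sub_nonneg]
    tauto
  rw [h]
  exact ((hf.comp continuousOn_fst fun q hq => hq.1).sub continuousOn_snd
    ).preimage_isClosed_of_isClosed (isClosed_Icc.prod isClosed_Ici) isClosed_Ici

theorem isCompact_subgraph (hf : ContinuousOn f (Icc 0 a)) : IsCompact (subgraph a f) := by
  obtain ⟨M, hM⟩ := isCompact_Icc.bddAbove_image hf
  refine (isCompact_Icc.prod (isCompact_Icc (a := 0) (b := M))).of_isClosed_subset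
    (isClosed_subgraph hf) fun q hq => ⟨⟨hq.1, hq.2.1⟩, hq.2.2.1, ?_⟩
  exact hq.2.2.2.trans (hM (mem_image_of_mem f ⟨hq.1, hq.2.1⟩))

theorem mem_interior_subgraph (hf : ContinuousOn f (Icc 0 a)) {p : ℝ × ℝ}
    (h₁ : p.1 ∈ Ioo 0 a) (h₂ : p.2 ∈ Ioo 0 (f p.1)) : p ∈ interior (subgraph a f) := by
  have hf₁ : ContinuousAt (fun q : ℝ × ℝ => f q.1) p :=
    (hf.continuousAt (Icc_mem_nhds h₁.1 h₁.2)).comp continuous_fst.continuousAt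
  rw [mem_interior_iff_mem_nhds]
  filter_upwards [continuous_fst.continuousAt.preimage_mem_nhds (Ioo_mem_nhds h₁.1 h₁.2),
    continuous_snd.continuousAt.preimage_mem_nhds (Ioi_mem_nhds h₂.1),
    continuous_snd.continuousAt.eventually_lt hf₁ h₂.2] with q hq₁ hq₂ hq₃
  exact ⟨hq₁.1.le, hq₁.2.le, le_of_lt hq₂, hq₃.le⟩

theorem ae_mem_interior_subgraph (hf : ContinuousOn f (Icc 0 a)) :
    ∀ᵐ q : ℝ × ℝ, q ∈ subgraph a f → q ∈ interior (subgraph a f) := by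
  have hmeas : MeasurableSet {q | q ∈ subgraph a f → q ∈ interior (subgraph a f)} := by
    simp only [imp_iff_not_or]
    exact (isClosed_subgraph hf).measurableSet.compl.union isOpen_interior.measurableSet
  rw [Measure.volume_eq_prod, Measure.ae_prod_iff_ae_ae hmeas]
  filter_upwards [(countable_singleton 0).insert a |>.ae_notMem volume] with x hx
  filter_upwards [(countable_singleton 0).insert (f x) |>.ae_notMem volume] with y hy hxy
  simp only [mem_insert_iff, mem_singleton_iff, not_or] at hx hy
  exact mem_interior_subgraph hf ⟨lt_of_le_of_ne hxy.1 (Ne.symm hx.2), lt_of_le_of_ne hxy.2.1 hx.1⟩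
    ⟨lt_of_le_of_ne hxy.2.2.1 (Ne.symm hy.2), lt_of_le_of_ne hxy.2.2.2 hy.1⟩

theorem preimage_swap_subgraph {b : ℝ} {g : ℝ → ℝ} (hf : StrictAntiOn f (Icc 0 a))
    (hfmaps : MapsTo f (Icc 0 a) (Icc 0 b)) (hgmaps : MapsTo g (Icc 0 b) (Icc 0 a))
    (hfg : RightInvOn g f (Icc 0 b)) : Prod.swap ⁻¹' subgraph a f = subgraph b g := by
  ext ⟨y, x⟩
  simp only [subgraph, mem_preimage, Prod.swap_prod_mk, mem_ofPred_eq]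
  constructor
  · rintro ⟨hx₀, hxa, hy₀, hyf⟩
    have hyb : y ≤ b := hyf.trans (hfmaps ⟨hx₀, hxa⟩).2
    refine ⟨hy₀, hyb, hx₀, not_lt.1 fun hlt => ?_⟩
    have := hf (hgmaps ⟨hy₀, hyb⟩) ⟨hx₀, hxa⟩ hlt
    rw [hfg ⟨hy₀, hyb⟩] at this
    exact hyf.not_gt this
  · rintro ⟨hy₀, hyb, hx₀, hxg⟩
    have hga := hgmaps ⟨hy₀, hyb⟩
    refine ⟨hx₀, hxg.trans hga.2, hy₀, ?_⟩
    simpa only [hfg ⟨hy₀, hyb⟩] using hf.antitoneOn ⟨hx₀, hxg.trans hga.2⟩ hga hxg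

theorem mk_mem_subgraph_of_mem_uIcc_inv {b : ℝ} {g : ℝ → ℝ}
    (hswap : Prod.swap ⁻¹' subgraph a f = subgraph b g) {p : ℝ × ℝ} (hp : p ∈ subgraph a f)
    {σ : ℝ} (hσ : σ ∈ uIcc p.1 (g p.2)) : (σ, p.2) ∈ subgraph a f := by
  have hσD := mk_mem_subgraph_of_mem_uIcc (hswap ▸ hp : p.swap ∈ subgraph b g) hσ
  rwa [← hswap] at hσD

end Subgraph

section Derivative

variable {E : Type*} [NormedAddCommGroup E] [NormedSpace ℝ E]
  {a : ℝ} {f : ℝ → ℝ} {G : ℝ × ℝ → E}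

theorem setIntegral_upperRight_subgraph (hf : ContinuousOn f (Icc 0 a))
    (hG : ContinuousOn G (subgraph a f)) {σ t : ℝ} (hσ : σ ∈ Icc 0 a) (ht : 0 ≤ t) :
    ∫ q in upperRight (subgraph a f) (σ, t), G q =
      ∫ x in σ..a, ∫ τ in Icc t (f x), G (x, τ) := by
  have hmeas := (isClosed_subgraph hf).measurableSet.upperRight (σ, t)
  have hint : IntegrableOn G (upperRight (subgraph a f) (σ, t)) :=
    (hG.integrableOn_compact (isCompact_subgraph hf)).mono_set fun q hq => hq.1
  have hregion : upperRight (subgraph a f) (σ, t) =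
      {q | q.1 ∈ Icc σ a ∧ q.2 ∈ Icc t (f q.1)} := by
    ext q
    exact ⟨fun ⟨⟨_, hqa, _, hqf⟩, hσq, htq⟩ => ⟨⟨hσq, hqa⟩, htq, hqf⟩,
      fun ⟨⟨hσq, hqa⟩, htq, hqf⟩ => ⟨⟨hσ.1.trans hσq, hqa, ht.trans htq, hqf⟩, hσq, htq⟩⟩
  rw [Measure.volume_eq_prod] at hint ⊢
  rw [hregion] at hmeas hint ⊢
  rw [integral_of_le hσ.2, ← integral_Icc_eq_integral_Ioc]
  exact setIntegral_eq_setIntegral_setIntegral (B := fun x => Icc t (f x))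
    measurableSet_Icc hmeas hint

variable [CompleteSpace E]

theorem hasDerivAt_setIntegral_upperRight_subgraph (hf : ContinuousOn f (Icc 0 a))
    (hG : Continuous G) {s t : ℝ} (hs : s ∈ Ioo 0 a) (ht : t ∈ Icc 0 (f s)) :
    HasDerivAt (fun σ => ∫ q in upperRight (subgraph a f) (σ, t), G q)
      (-∫ τ in t..f s, G (s, τ)) s := by
  have ha : 0 ≤ a := hs.1.le.trans hs.2.le
  set F := IccExtend ha ((Icc 0 a).domRestrict f)
  have hF : Continuous F := continuous_IccExtend_iff.2 hf.domRestrict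
  have hFf : EqOn F f (Icc 0 a) := fun x hx => IccExtend_of_mem ha _ hx
  -- the slice integral `∫ τ in Icc t (f x), G (x, τ)`, written so as to be continuous on all of `ℝ`
  set W : ℝ → E := fun x => ∫ τ in t..max t (F x), G (x, τ)
  have hW : Continuous W :=
    continuous_parametric_intervalIntegral_of_continuous (by fun_prop) (continuous_const.max hF)
  have hfubini : ∀ σ ∈ Icc 0 a,
      ∫ q in upperRight (subgraph a f) (σ, t), G q = ∫ x in σ..a, W x := by
    intro σ hσ
    rw [setIntegral_upperRight_subgraph hf hG.continuousOn hσ ht.1]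
    refine integral_congr fun x hx => ?_
    rw [uIcc_of_le hσ.2] at hx
    rw [← hFf ⟨hσ.1.trans hx.1, hx.2⟩]
    exact setIntegral_Icc_eq_intervalIntegral_max (fun τ => G (x, τ)) t (F x)
  have hWs : W s = ∫ τ in t..f s, G (s, τ) := by
    simp only [W, hFf (Ioo_subset_Icc_self hs), max_eq_right ht.2]
  rw [← hWs]
  exact (integral_hasDerivAt_left (hW.intervalIntegrable _ _) (hW.stronglyMeasurableAtFilter _ _)
    hW.continuousAt).congr_of_eventuallyEq (eventually_of_mem (Icc_mem_nhds hs.1 hs.2) hfubini)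

theorem hasDerivAt_fst_of_eq_add_setIntegral_upperRight (hf : ContinuousOn f (Icc 0 a))
    (hG : Continuous G) {ψ ψ₀ : ℝ × ℝ → E}
    (hψ : ∀ q ∈ subgraph a f, ψ q = ψ₀ q + ∫ r in upperRight (subgraph a f) q, G r)
    {p : ℝ × ℝ} (hp : p ∈ interior (subgraph a f)) {ψ₀' : E}
    (hψ₀ : HasDerivWithinAt (fun σ => ψ₀ (σ, p.2)) ψ₀' {σ | (σ, p.2) ∈ subgraph a f} p.1) :
    HasDerivAt (fun σ => ψ (σ, p.2)) (ψ₀' - ∫ τ in p.2..f p.1, G (p.1, τ)) p.1 := by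
  have hnhds : {σ | (σ, p.2) ∈ subgraph a f} ∈ 𝓝 p.1 :=
    (Continuous.prodMk_left p.2).continuousAt.preimage_mem_nhds (mem_interior_iff_mem_nhds.1 hp)
  have hs : p.1 ∈ Ioo 0 a := Icc_mem_nhds_iff.1 (mem_of_superset hnhds fun σ hσ => ⟨hσ.1, hσ.2.1⟩)
  have hpD := interior_subset hp
  rw [sub_eq_add_neg]
  refine ((hψ₀.hasDerivAt hnhds).add (hasDerivAt_setIntegral_upperRight_subgraph hf hG hs
    ⟨hpD.2.2.1, hpD.2.2.2⟩)).congr_of_eventuallyEq ?_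
  filter_upwards [hnhds] with σ hσ using hψ _ hσ

theorem hasDerivAt_snd_of_eq_add_setIntegral_upperRight {b : ℝ} {g : ℝ → ℝ}
    (hg : ContinuousOn g (Icc 0 b)) (hswap : Prod.swap ⁻¹' subgraph a f = subgraph b g)
    (hG : Continuous G) {ψ ψ₀ : ℝ × ℝ → E}
    (hψ : ∀ q ∈ subgraph a f, ψ q = ψ₀ q + ∫ r in upperRight (subgraph a f) q, G r)
    {p : ℝ × ℝ} (hp : p ∈ interior (subgraph a f)) {ψ₀' : E}
    (hψ₀ : HasDerivWithinAt (fun τ => ψ₀ (p.1, τ)) ψ₀' {τ | (p.1, τ) ∈ subgraph a f} p.2) :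
    HasDerivAt (fun τ => ψ (p.1, τ)) (ψ₀' - ∫ σ in p.1..g p.2, G (σ, p.2)) p.2 := by
  have hψ' : ∀ q ∈ subgraph b g,
      ψ q.swap = ψ₀ q.swap + ∫ r in upperRight (subgraph b g) q, G r.swap := by
    intro q hq
    rw [← hswap] at hq ⊢
    rw [hψ q.swap hq, upperRight_preimage_swap, Measure.volume_eq_prod,
      Measure.measurePreserving_swap.setIntegral_preimage_emb
        MeasurableEquiv.prodComm.measurableEmbedding, ← Measure.volume_eq_prod]
  have hp' : p.swap ∈ interior (subgraph b g) := by
    rw [← hswap, mem_interior_iff_mem_nhds]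
    exact continuous_swap.continuousAt.preimage_mem_nhds (x := p.swap)
      (mem_interior_iff_mem_nhds.1 hp)
  exact hasDerivAt_fst_of_eq_add_setIntegral_upperRight hg (hG.comp continuous_swap) hψ' hp'
    (by rw [← hswap]; exact hψ₀)

end Derivative

theorem system_solution_gives_partials_general
    (n : ℕ) (a b : ℝ)
    (ϑ₂ ϑ₁ : ℝ → ℝ)
    (hϑC1 : ContDiffOn ℝ 1 ϑ₂ (Icc 0 a))
    (hϑanti : StrictAntiOn ϑ₂ (Icc 0 a))
    (hϑimg : ϑ₂ '' Icc 0 a = Icc 0 b)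
    (hinv₁ : ∀ s ∈ Icc (0:ℝ) a, ϑ₁ (ϑ₂ s) = s)
    (hinv₂ : ∀ t ∈ Icc (0:ℝ) b, ϑ₂ (ϑ₁ t) = t)
    (hϑ₁maps : ∀ t ∈ Icc (0:ℝ) b, ϑ₁ t ∈ Icc (0:ℝ) a)
    (D : Set (ℝ × ℝ))
    (hD : D = {p : ℝ × ℝ | 0 ≤ p.1 ∧ p.1 ≤ a ∧ 0 ≤ p.2 ∧ p.2 ≤ ϑ₂ p.1})
    (g : ℝ × ℝ → EuclideanSpace ℝ (Fin n) → EuclideanSpace ℝ (Fin n) →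
        EuclideanSpace ℝ (Fin n) → EuclideanSpace ℝ (Fin n))
    (hgcont : ContinuousOn
      (fun q : (ℝ × ℝ) × EuclideanSpace ℝ (Fin n) × EuclideanSpace ℝ (Fin n) ×
          EuclideanSpace ℝ (Fin n) => g q.1 q.2.1 q.2.2.1 q.2.2.2)
      (D ×ˢ (univ : Set (EuclideanSpace ℝ (Fin n) × EuclideanSpace ℝ (Fin n) ×
          EuclideanSpace ℝ (Fin n)))))
    -- `ψ₀` is continuous on `D` with continuous first partial derivatives `ψ₀s`, `ψ₀t`
    (ψ₀ ψ₀s ψ₀t : ℝ × ℝ → EuclideanSpace ℝ (Fin n))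
    (hψ₀ds : ∀ p ∈ D, HasDerivWithinAt (fun σ => ψ₀ (σ, p.2)) (ψ₀s p)
      {σ : ℝ | (σ, p.2) ∈ D} p.1)
    (hψ₀dt : ∀ p ∈ D, HasDerivWithinAt (fun τ => ψ₀ (p.1, τ)) (ψ₀t p)
      {τ : ℝ | (p.1, τ) ∈ D} p.2)
    (ψ P Q : ℝ × ℝ → EuclideanSpace ℝ (Fin n))
    (hψ : ContinuousOn ψ D) (hP : ContinuousOn P D) (hQ : ContinuousOn Q D)
    (heq₁ : ∀ p ∈ D,
      ψ p = ψ₀ p + ∫ q in {q ∈ D | p.1 ≤ q.1 ∧ p.2 ≤ q.2}, g q (ψ q) (P q) (Q q))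
    (heq₂ : ∀ p ∈ D,
      P p = ψ₀s p -
        ∫ τ in p.2..ϑ₂ p.1, g (p.1, τ) (ψ (p.1, τ)) (P (p.1, τ)) (Q (p.1, τ)))
    (heq₃ : ∀ p ∈ D,
      Q p = ψ₀t p -
        ∫ σ in p.1..ϑ₁ p.2, g (σ, p.2) (ψ (σ, p.2)) (P (σ, p.2)) (Q (σ, p.2))) :
    (∀ p : ℝ × ℝ, 0 < p.1 → p.1 < a → 0 < p.2 → p.2 < ϑ₂ p.1 →
      HasDerivAt (fun σ => ψ (σ, p.2)) (P p) p.1 ∧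
      HasDerivAt (fun τ => ψ (p.1, τ)) (Q p) p.2) ∧
    (∀ p ∈ D,
      ψ p = ψ₀ p + ∫ q in {q ∈ D | p.1 ≤ q.1 ∧ p.2 ≤ q.2},
        g q (ψ q) (deriv (fun σ => ψ (σ, q.2)) q.1) (deriv (fun τ => ψ (q.1, τ)) q.2)) := by
  obtain rfl : D = subgraph a ϑ₂ := hD
  have hϑ₂ : ContinuousOn ϑ₂ (Icc 0 a) := hϑC1.continuousOn
  have hϑ₁ : ContinuousOn ϑ₁ (Icc 0 b) :=
    InvOn.continuousOn_of_isCompact ⟨hinv₁, hinv₂⟩ isCompact_Icc hϑ₂ hϑ₁maps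
  have hswap : Prod.swap ⁻¹' subgraph a ϑ₂ = subgraph b ϑ₁ :=
    preimage_swap_subgraph hϑanti (hϑimg ▸ mapsTo_image ϑ₂ (Icc 0 a)) hϑ₁maps hinv₂
  have hmeas := (isClosed_subgraph hϑ₂).measurableSet
  obtain ⟨G, hG, hGg⟩ : ∃ G : ℝ × ℝ → EuclideanSpace ℝ (Fin n), Continuous G ∧
      EqOn G (fun q => g q (ψ q) (P q) (Q q)) (subgraph a ϑ₂) :=
    (hgcont.comp (continuousOn_id.prodMk (hψ.prodMk (hP.prodMk hQ))) fun q hq => ⟨hq, mem_univ _⟩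
      ).exists_continuous_eqOn (isClosed_subgraph hϑ₂)
  have hψG : ∀ p ∈ subgraph a ϑ₂,
      ψ p = ψ₀ p + ∫ q in upperRight (subgraph a ϑ₂) p, G q := fun p hp => by
    rw [heq₁ p hp]
    exact congrArg _ (setIntegral_congr_fun (hmeas.upperRight p) fun q hq => (hGg hq.1).symm)
  have hpartials : ∀ p ∈ interior (subgraph a ϑ₂), HasDerivAt (fun σ => ψ (σ, p.2)) (P p) p.1 ∧
      HasDerivAt (fun τ => ψ (p.1, τ)) (Q p) p.2 := by
    intro p hp
    have hpD : p ∈ subgraph a ϑ₂ := interior_subset hp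
    rw [heq₂ p hpD, heq₃ p hpD,
      integral_congr fun τ hτ => (hGg (mk_mem_subgraph_of_mem_uIcc hpD hτ)).symm,
      integral_congr fun σ hσ => (hGg (mk_mem_subgraph_of_mem_uIcc_inv hswap hpD hσ)).symm]
    exact ⟨hasDerivAt_fst_of_eq_add_setIntegral_upperRight hϑ₂ hG hψG hp (hψ₀ds p hpD),
      hasDerivAt_snd_of_eq_add_setIntegral_upperRight hϑ₁ hswap hG hψG hp (hψ₀dt p hpD)⟩
  refine ⟨fun p h₁ h₂ h₃ h₄ => hpartials p (mem_interior_subgraph hϑ₂ ⟨h₁, h₂⟩ ⟨h₃, h₄⟩),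
    fun p hp => ?_⟩
  rw [heq₁ p hp]
  congr 1
  refine setIntegral_congr_ae (hmeas.upperRight p) ?_
  filter_upwards [ae_mem_interior_subgraph hϑ₂] with q hq hqE
  obtain ⟨hs, ht⟩ := hpartials q (hq hqE.1)
  rw [hs.deriv, ht.deriv]

/-- Equivalence of the expanded system (B.5) with the single backward
Volterra integral equation (B.1): if `(ψ,P,Q)` solves the system, then `P` and `Q` are the
first partial derivatives of `ψ` in the interior of `D`, and `ψ` solves the single
integral equation. -/
theorem system_solution_gives_partials
    (n : ℕ) (a b : ℝ) (ha : 0 < a) (hb : 0 < b)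
    (ϑ₂ ϑ₁ : ℝ → ℝ)
    (hϑC1 : ContDiffOn ℝ 1 ϑ₂ (Icc 0 a))
    (hϑanti : StrictAntiOn ϑ₂ (Icc 0 a))
    (hϑimg : ϑ₂ '' Icc 0 a = Icc 0 b)
    (hinv₁ : ∀ s ∈ Icc (0:ℝ) a, ϑ₁ (ϑ₂ s) = s)
    (hinv₂ : ∀ t ∈ Icc (0:ℝ) b, ϑ₂ (ϑ₁ t) = t)
    (hϑ₁maps : ∀ t ∈ Icc (0:ℝ) b, ϑ₁ t ∈ Icc (0:ℝ) a)
    (D : Set (ℝ × ℝ))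
    (hD : D = {p : ℝ × ℝ | 0 ≤ p.1 ∧ p.1 ≤ a ∧ 0 ≤ p.2 ∧ p.2 ≤ ϑ₂ p.1})
    (g : ℝ × ℝ → EuclideanSpace ℝ (Fin n) → EuclideanSpace ℝ (Fin n) →
        EuclideanSpace ℝ (Fin n) → EuclideanSpace ℝ (Fin n))
    (hgcont : ContinuousOn
      (fun q : (ℝ × ℝ) × EuclideanSpace ℝ (Fin n) × EuclideanSpace ℝ (Fin n) ×
          EuclideanSpace ℝ (Fin n) => g q.1 q.2.1 q.2.2.1 q.2.2.2)
      (D ×ˢ (univ : Set (EuclideanSpace ℝ (Fin n) × EuclideanSpace ℝ (Fin n) ×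
          EuclideanSpace ℝ (Fin n)))))
    -- `ψ₀` is continuous on `D` with continuous first partial derivatives `ψ₀s`, `ψ₀t`
    (ψ₀ ψ₀s ψ₀t : ℝ × ℝ → EuclideanSpace ℝ (Fin n))
    (hψ₀ : ContinuousOn ψ₀ D) (hψ₀s : ContinuousOn ψ₀s D) (hψ₀t : ContinuousOn ψ₀t D)
    (hψ₀ds : ∀ p ∈ D, HasDerivWithinAt (fun σ => ψ₀ (σ, p.2)) (ψ₀s p)
      {σ : ℝ | (σ, p.2) ∈ D} p.1)
    (hψ₀dt : ∀ p ∈ D, HasDerivWithinAt (fun τ => ψ₀ (p.1, τ)) (ψ₀t p)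
      {τ : ℝ | (p.1, τ) ∈ D} p.2)
    (ψ P Q : ℝ × ℝ → EuclideanSpace ℝ (Fin n))
    (hψ : ContinuousOn ψ D) (hP : ContinuousOn P D) (hQ : ContinuousOn Q D)
    (heq₁ : ∀ p ∈ D,
      ψ p = ψ₀ p + ∫ q in {q ∈ D | p.1 ≤ q.1 ∧ p.2 ≤ q.2}, g q (ψ q) (P q) (Q q))
    (heq₂ : ∀ p ∈ D,
      P p = ψ₀s p -
        ∫ τ in p.2..ϑ₂ p.1, g (p.1, τ) (ψ (p.1, τ)) (P (p.1, τ)) (Q (p.1, τ)))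
    (heq₃ : ∀ p ∈ D,
      Q p = ψ₀t p -
        ∫ σ in p.1..ϑ₁ p.2, g (σ, p.2) (ψ (σ, p.2)) (P (σ, p.2)) (Q (σ, p.2))) :
    (∀ p : ℝ × ℝ, 0 < p.1 → p.1 < a → 0 < p.2 → p.2 < ϑ₂ p.1 →
      HasDerivAt (fun σ => ψ (σ, p.2)) (P p) p.1 ∧
      HasDerivAt (fun τ => ψ (p.1, τ)) (Q p) p.2) ∧
    (∀ p ∈ D,
      ψ p = ψ₀ p + ∫ q in {q ∈ D | p.1 ≤ q.1 ∧ p.2 ≤ q.2},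
        g q (ψ q) (deriv (fun σ => ψ (σ, q.2)) q.1) (deriv (fun τ => ψ (q.1, τ)) q.2)) :=
  system_solution_gives_partials_general n a b ϑ₂ ϑ₁ hϑC1 hϑanti hϑimg hinv₁ hinv₂ hϑ₁maps D hD g
    hgcont ψ₀ ψ₀s ψ₀t hψ₀ds hψ₀dt ψ P Q hψ hP hQ heq₁ heq₂ heq₃
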